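/- arXiv:0902.3175 — 2 statements merged into one kernel-verified Lean document; each statement's English description precedes it below -/
import Mathlib

section
/- The number of subgroups of a finite group G is at most 2^((log₂|G|)²). -/
/-!
Growing a generating tuple one element at a time, each new generator outside the subgroup
generated so far at least doubles it (Lagrange), so every subgroup `H` is generated by at most
`log₂ |H| ≤ log₂ |G|` elements. Padding generating tuples with `1`, the map
`f ↦ closure (range f)` from `G ^ ⌊log₂ |G|⌋` onto the subgroups is surjective, and
`|G| ^ log₂ |G| = 2 ^ (log₂ |G|)²`.
-/

open Function Set

namespace Subgroup

variable {G : Type*} [Group G]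

theorem two_mul_card_le_card_of_lt {H K : Subgroup G} [Finite K] (h : H < K) :
    2 * Nat.card H ≤ Nat.card K := by
  have hcard : Nat.card H * H.relIndex K = Nat.card K := by
    simpa only [relIndex_bot_left] using relIndex_mul_relIndex ⊥ H K bot_le h.le
  have h0 : H.relIndex K ≠ 0 := by
    intro h0
    rw [h0, mul_zero] at hcard
    exact Nat.card_pos.ne' hcard.symm
  have h1 : H.relIndex K ≠ 1 := relIndex_eq_one.not.mpr h.not_ge
  calc 2 * Nat.card H ≤ H.relIndex K * Nat.card H := Nat.mul_le_mul_right _ (by omega)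
    _ = Nat.card K := by rw [mul_comm, hcard]

theorem closure_range_extend_one {ι κ : Type*} {e : ι → κ} (he : Injective e) (f : ι → G) :
    closure (range (extend e f 1)) = closure (range f) := by
  apply le_antisymm
  · rw [closure_le]
    rintro _ ⟨j, rfl⟩
    by_cases hj : ∃ i, e i = j
    · obtain ⟨i, rfl⟩ := hj
      rw [he.extend_apply]
      exact subset_closure ⟨i, rfl⟩
    · rw [extend_apply' _ _ _ hj]
      exact one_mem _
  · exact closure_mono (range_subset_iff.mpr fun i => ⟨e i, he.extend_apply f 1 i⟩)

theorem exists_closure_range_eq_two_pow_le_card [Finite G] (H : Subgroup G) :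
    ∃ (m : ℕ) (f : Fin m → G), closure (range f) = H ∧ 2 ^ m ≤ Nat.card H := by
  suffices ∀ K ≤ H, ∀ (m : ℕ) (f : Fin m → G), closure (range f) = K → 2 ^ m ≤ Nat.card K →
      ∃ (m : ℕ) (f : Fin m → G), closure (range f) = H ∧ 2 ^ m ≤ Nat.card H from
    this ⊥ bot_le 0 finZeroElim (by simp) (by simp)
  intro K
  induction K using WellFoundedGT.induction with
  | _ K ih =>
    intro hKH m f hf hcard
    rcases hKH.eq_or_lt with rfl | hlt
    · exact ⟨m, f, hf, hcard⟩
    obtain ⟨x, hxH, hxK⟩ := SetLike.exists_of_lt hlt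
    have hle : closure (range (Fin.cons x f : Fin (m + 1) → G)) ≤ H := by
      rw [Fin.range_cons, closure_le, insert_subset_iff]
      exact ⟨hxH, fun y hy => hlt.le (hf ▸ subset_closure hy)⟩
    have hgt : K < closure (range (Fin.cons x f : Fin (m + 1) → G)) := by
      rw [Fin.range_cons, SetLike.lt_iff_le_and_exists, ← hf]
      exact ⟨closure_mono (subset_insert x _), x, subset_closure (mem_insert x _), hf ▸ hxK⟩
    refine ih _ hgt hle (m + 1) _ rfl ?_
    calc 2 ^ (m + 1) = 2 * 2 ^ m := by ring
      _ ≤ 2 * Nat.card K := Nat.mul_le_mul_left 2 hcard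
      _ ≤ _ := two_mul_card_le_card_of_lt hgt

theorem surjective_closure_range_fin_log [Finite G] :
    Surjective fun f : Fin (Nat.log 2 (Nat.card G)) → G => closure (range f) := by
  intro H
  obtain ⟨m, f, hf, hcard⟩ := exists_closure_range_eq_two_pow_le_card H
  have hm : m ≤ Nat.log 2 (Nat.card G) :=
    Nat.le_log_of_pow_le one_lt_two (hcard.trans H.card_le_card_group)
  exact ⟨extend (Fin.castLE hm) f 1, (closure_range_extend_one (Fin.castLE_injective hm) f).trans hf⟩

theorem card_le_card_pow_log [Finite G] :
    Nat.card (Subgroup G) ≤ Nat.card G ^ Nat.log 2 (Nat.card G) := by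
  simpa only [Nat.card_fun, Nat.card_eq_fintype_card, Fintype.card_fin] using
    Nat.card_le_card_of_surjective _ (surjective_closure_range_fin_log (G := G))

end Subgroup

theorem Real.natCast_pow_natLog_le_two_rpow_logb_sq (n : ℕ) :
    (n : ℝ) ^ Nat.log 2 n ≤ 2 ^ (Real.logb 2 n ^ 2) := by
  rcases n.eq_zero_or_pos with rfl | hn
  · simp
  have hn' : (0 : ℝ) < n := by exact_mod_cast hn
  calc (n : ℝ) ^ Nat.log 2 n = 2 ^ (Real.logb 2 n * Nat.log 2 n) := by
        rw [Real.rpow_mul zero_le_two, Real.rpow_logb two_pos (by norm_num) hn', Real.rpow_natCast]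
    _ ≤ 2 ^ (Real.logb 2 n ^ 2) := by
        gcongr
        · exact one_le_two
        rw [sq]
        exact mul_le_mul_of_nonneg_left (Real.natLog_le_logb n 2)
          (Real.logb_nonneg one_lt_two (by exact_mod_cast hn))

/-- The number of subgroups of a finite group `G` is at most `2 ^ ((log₂ |G|)²)`. -/
theorem stmt_1 {G : Type*} [Group G] [Fintype G] :
    (Nat.card (Subgroup G) : ℝ) ≤ 2 ^ ((Real.logb 2 (Fintype.card G)) ^ 2) := by
  rw [← Nat.card_eq_fintype_card]
  calc (Nat.card (Subgroup G) : ℝ) ≤ (Nat.card G : ℝ) ^ Nat.log 2 (Nat.card G) := by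
        exact_mod_cast Subgroup.card_le_card_pow_log
    _ ≤ _ := Real.natCast_pow_natLog_le_two_rpow_logb_sq _
end

section
/- Let G be a finite group, 𝔽 a field of characteristic not dividing |G|, H ≤ K ≤ G subgroups. If for every irreducible 𝔽-representation ρ of G the H-fixed subspace I_H(ρ) equals the K-fixed subspace I_K(ρ), then H = K. -/
/-!
By Maschke's theorem every finite-dimensional representation splits into a direct sum of
irreducible ones, and since the projections of a `G`-stable splitting are `G`-equivariant, the
`H`-fixed vectors decompose along it. Induction on the dimension therefore turns the hypothesis
on irreducibles into `V^H ≤ V^K` for every finite-dimensional `V`. In the permutation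
representation `𝔽[G/H]` the basis vector of the trivial coset is fixed exactly by `H`, so `K ≤ H`.
-/

open CategoryTheory Representation

namespace FDRep

variable {k G : Type} [Field k] [Monoid G]

theorem injective_hom_of_mono {X Y : FDRep k G} (f : X ⟶ Y) [Mono f] :
    Function.Injective f.hom.hom.hom :=
  (ModuleCat.mono_iff_injective _).mp
    ((Action.forget (FGModuleCat k) G ⋙ forget₂ (FGModuleCat k) (ModuleCat k)).map_mono f)

theorem hom_comm_apply {X Y : FDRep k G} (f : X ⟶ Y) (g : G) (x : X) :
    f.hom (X.ρ g x) = Y.ρ g (f.hom x) :=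
  LinearMap.congr_fun (congrArg (fun φ => φ.hom.hom) (f.comm g)) x

theorem hom_eq_zero_iff {X Y : FDRep k G} (f : X ⟶ Y) : f = 0 ↔ f.hom.hom.hom = 0 :=
  ⟨fun h => h ▸ rfl, fun h => Action.hom_ext _ _ (FGModuleCat.hom_ext h)⟩

noncomputable def rangeSubrep {V : Type} [AddCommGroup V] [Module k V] [FiniteDimensional k V]
    {ρ : Representation k G V} {Y : FDRep k G} (f : Y ⟶ FDRep.of ρ) : Subrepresentation ρ where
  toSubmodule := LinearMap.range f.hom.hom.hom
  apply_mem_toSubmodule g := by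
    rintro _ ⟨y, rfl⟩
    exact ⟨Y.ρ g y, hom_comm_apply f g y⟩

theorem simple_of_isIrreducible {V : Type} [AddCommGroup V] [Module k V] [FiniteDimensional k V]
    (ρ : Representation k G V) [ρ.IsIrreducible] : Simple (FDRep.of ρ) where
  mono_isIso_iff_nonzero {Y} f _ := by
    have hrange : rangeSubrep f = ⊤ ↔ rangeSubrep f ≠ ⊥ :=
      ⟨fun h => h ▸ top_ne_bot, (IsSimpleOrder.eq_bot_or_eq_top _).resolve_left⟩
    rw [ConcreteCategory.isIso_iff_bijective]
    change Function.Bijective f.hom.hom.hom ↔ _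
    rw [Function.Bijective, and_iff_right (injective_hom_of_mono f), Ne, hom_eq_zero_iff,
      ← LinearMap.range_eq_bot, ← LinearMap.range_eq_top]
    simp only [ne_eq, Subrepresentation.ext_iff] at hrange
    exact hrange

end FDRep

namespace Subrepresentation

variable {k G V : Type*} [Field k] [Monoid G] [AddCommGroup V] [Module k V]
  {ρ : Representation k G V}

theorem isCompl_toSubmodule {σ τ : Subrepresentation ρ} (h : IsCompl σ τ) :
    IsCompl σ.toSubmodule τ.toSubmodule :=
  ⟨disjoint_iff.mpr (congrArg toSubmodule h.inf_eq_bot),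
    codisjoint_iff.mpr (congrArg toSubmodule h.sup_eq_top)⟩

theorem commute_projection {σ τ : Subrepresentation ρ}
    (h : IsCompl σ.toSubmodule τ.toSubmodule) (g : G) :
    Commute (σ.toSubmodule.projection τ.toSubmodule h) (ρ g) := by
  rw [LinearMap.IsIdempotentElem.commute_iff (Submodule.isIdempotentElem_projection h),
    Submodule.range_projection, Submodule.ker_projection, Module.End.mem_invtSubmodule,
    Module.End.mem_invtSubmodule]
  exact ⟨fun _ hx => σ.apply_mem_toSubmodule g hx, fun _ hx => τ.apply_mem_toSubmodule g hx⟩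

theorem exists_ne_bot_ne_top [Nontrivial V] (h : ¬ ρ.IsIrreducible) :
    ∃ σ : Subrepresentation ρ, σ ≠ ⊥ ∧ σ ≠ ⊤ := by
  by_contra! hσ
  have : Nontrivial (Subrepresentation ρ) :=
    ⟨⊥, ⊤, fun h' => bot_ne_top (α := Submodule k V) (congrArg toSubmodule h')⟩
  exact h ⟨fun σ => or_iff_not_imp_left.mpr (hσ σ)⟩

variable {M : Type*} [Group M] (φ : M →* G)

theorem mem_invariants_comp_iff (σ : Subrepresentation ρ) (x : σ.toSubmodule) :
    x ∈ invariants (σ.toRepresentation.comp φ) ↔ (x : V) ∈ invariants (ρ.comp φ) := by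
  simp only [mem_invariants, Subtype.ext_iff]
  rfl

theorem projectionOnto_mem_invariants_comp {σ τ : Subrepresentation ρ}
    (h : IsCompl σ.toSubmodule τ.toSubmodule) {v : V} (hv : v ∈ invariants (ρ.comp φ)) :
    σ.toSubmodule.projectionOnto τ.toSubmodule h v ∈ invariants (σ.toRepresentation.comp φ) := by
  rw [mem_invariants_comp_iff, Submodule.coe_projectionOnto_apply, mem_invariants]
  intro m
  rw [MonoidHom.comp_apply, ← Module.End.mul_apply, ← (commute_projection h (φ m)).eq,
    Module.End.mul_apply]
  exact congrArg _ (hv m)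

theorem invariants_comp_le_of_isCompl {N : Type*} [Group N] (ψ : N →* G)
    {σ τ : Subrepresentation ρ} (h : IsCompl σ τ)
    (hσ : invariants (σ.toRepresentation.comp φ) ≤ invariants (σ.toRepresentation.comp ψ))
    (hτ : invariants (τ.toRepresentation.comp φ) ≤ invariants (τ.toRepresentation.comp ψ)) :
    invariants (ρ.comp φ) ≤ invariants (ρ.comp ψ) := by
  intro v hv
  have hστ := isCompl_toSubmodule h
  rw [← Submodule.projection_add_projection_eq_self hστ v]
  refine add_mem ?_ ?_
  · simpa only [mem_invariants_comp_iff, Submodule.coe_projectionOnto_apply] using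
      hσ (projectionOnto_mem_invariants_comp φ hστ hv)
  · simpa only [mem_invariants_comp_iff, Submodule.coe_projectionOnto_apply] using
      hτ (projectionOnto_mem_invariants_comp φ hστ.symm hv)

end Subrepresentation

theorem Representation.invariants_comp_le_of_forall_simple {k G : Type} [Field k] [Group G]
    [Finite G] [NeZero (Nat.card G : k)] {M N : Type*} [Group M] [Group N]
    (φ : M →* G) (ψ : N →* G)
    (hsimple : ∀ W : FDRep k G, Simple W → invariants (W.ρ.comp φ) ≤ invariants (W.ρ.comp ψ))
    {V : Type} [AddCommGroup V] [Module k V] [FiniteDimensional k V]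
    (ρ : Representation k G V) : invariants (ρ.comp φ) ≤ invariants (ρ.comp ψ) := by
  induction hn : Module.finrank k V using Nat.strong_induction_on generalizing V with
  | _ n ih =>
    rcases subsingleton_or_nontrivial V with hV | hV
    · intro v _
      rw [Subsingleton.elim v 0]
      exact zero_mem _
    by_cases hirr : ρ.IsIrreducible
    · exact hsimple (FDRep.of ρ) (FDRep.simple_of_isIrreducible ρ)
    obtain ⟨σ, hσ_bot, hσ_top⟩ := Subrepresentation.exists_ne_bot_ne_top hirr
    obtain ⟨τ, hστ⟩ := exists_isCompl σ
    have finrank_lt (π : Subrepresentation ρ) (hπ : π ≠ ⊤) : Module.finrank k π.toSubmodule < n :=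
      hn ▸ Submodule.finrank_lt fun h => hπ (Subrepresentation.ext h)
    exact Subrepresentation.invariants_comp_le_of_isCompl φ ψ hστ
      (ih _ (finrank_lt σ hσ_top) σ.toRepresentation rfl)
      (ih _ (finrank_lt τ fun h => hσ_bot (by simpa [h] using hστ.inf_eq_bot))
        τ.toRepresentation rfl)

theorem Representation.ofMulAction_single_eq_self_iff {k G X : Type*} [Semiring k] [Group G]
    [MulAction G X] {x : X} {r : k} (hr : r ≠ 0) (g : G) :
    ofMulAction k G X g (MonoidAlgebra.single x r) = MonoidAlgebra.single x r ↔
      g ∈ MulAction.stabilizer G x := by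
  rw [ofMulAction_single, MonoidAlgebra.single_left_inj hr, MulAction.mem_stabilizer_iff]

/-- Let `G` be a finite group, `𝔽` a field of characteristic not dividing `|G|`, and
`H ≤ K ≤ G` subgroups. If for every irreducible `𝔽`-representation `W` of `G` the `H`-fixed
subspace equals the `K`-fixed subspace, then `H = K`. -/
theorem stmt_13 {F G : Type} [Field F] [Group G] [Fintype G]
    (hchar : ¬ (ringChar F ∣ Fintype.card G))
    (H K : Subgroup G) (hHK : H ≤ K)
    (hfix : ∀ W : FDRep F G, Simple W →
      Representation.invariants (W.ρ.comp H.subtype) =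
        Representation.invariants (W.ρ.comp K.subtype)) :
    H = K := by
  have : NeZero (Nat.card G : F) :=
    ⟨by rwa [Nat.card_eq_fintype_card, Ne, ringChar.spec]⟩
  refine le_antisymm hHK fun g hg => ?_
  let ρ := ofMulAction F G (G ⧸ H)
  let v := MonoidAlgebra.single ((1 : G) : G ⧸ H) (1 : F)
  have hv : v ∈ invariants (ρ.comp H.subtype) := fun h =>
    (ofMulAction_single_eq_self_iff one_ne_zero (h : G)).mpr
      ((MulAction.stabilizer_quotient H).symm ▸ h.2)
  have hgv := invariants_comp_le_of_forall_simple H.subtype K.subtype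
    (fun W hW => (hfix W hW).le) ρ hv ⟨g, hg⟩
  rw [← MulAction.stabilizer_quotient H]
  exact (ofMulAction_single_eq_self_iff one_ne_zero g).mp hgv
end
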